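/- If H is a graph with o(H) = 𝒩 and G is a graph with n(G) ≥ 2, then ⌊n(G)/2⌋·γ(H) + ⌈n(G)/2⌉·γ_MB(H) ≤ γ_MB'(G⊙H) ≤ n(G)·γ_MB(H). -/

import Mathlib

/-!
Formalization of the Maker-Breaker domination game (MBD game).

In the MBD game on a graph `G`, Dominator and Staller alternately select
previously unplayed vertices.  Dominator wins when the set of vertices he has
selected is a dominating set of `G`; Staller wins when she has selected a
vertex of every dominating set of `G`, which happens exactly when the closed
neighbourhood of some vertex is entirely contained in her set of selected
vertices.
-/

/-- `D` is a dominating set of `G` (as a finset of vertices). -/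
def IsDomSet {V : Type*} (G : SimpleGraph V) (D : Finset V) : Prop :=
  ∀ v, v ∈ D ∨ ∃ u ∈ D, G.Adj u v

/-- Staller (whose selected vertices form `S`) has won: she owns the whole
closed neighbourhood of some vertex, hence a vertex of every dominating set. -/
def StallerWon {V : Type*} (G : SimpleGraph V) (S : Finset V) : Prop :=
  ∃ v, v ∈ S ∧ ∀ u, G.Adj v u → u ∈ S

section Game

variable {V : Type*} [DecidableEq V]

mutual
  /-- Position with Dominator's vertices `D`, Staller's vertices `S` and
  Dominator to move: Dominator can guarantee to complete a dominating set
  using at most `k` further moves of his own. -/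
  inductive DomWinD (G : SimpleGraph V) : Finset V → Finset V → ℕ → Prop where
    | done (D S : Finset V) (k : ℕ) : IsDomSet G D → DomWinD G D S k
    | step (D S : Finset V) (k : ℕ) (v : V) : v ∉ D → v ∉ S →
        DomWinS G (insert v D) S k → DomWinD G D S (k + 1)

  /-- Position with Dominator's vertices `D`, Staller's vertices `S` and
  Staller to move: Dominator can guarantee to complete a dominating set
  using at most `k` further moves of his own. -/
  inductive DomWinS (G : SimpleGraph V) : Finset V → Finset V → ℕ → Prop where
    | done (D S : Finset V) (k : ℕ) : IsDomSet G D → DomWinS G D S k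
    | step (D S : Finset V) (k : ℕ) : (∃ w, w ∉ D ∧ w ∉ S) →
        (∀ w, w ∉ D → w ∉ S → DomWinD G D (insert w S) k) → DomWinS G D S k
end

mutual
  /-- Position with Dominator's vertices `D`, Staller's vertices `S` and
  Staller to move: Staller can guarantee to claim a whole closed neighbourhood
  using at most `k` further moves of her own. -/
  inductive StalWinS (G : SimpleGraph V) : Finset V → Finset V → ℕ → Prop where
    | done (D S : Finset V) (k : ℕ) : StallerWon G S → StalWinS G D S k
    | step (D S : Finset V) (k : ℕ) (w : V) : w ∉ D → w ∉ S →
        StalWinD G D (insert w S) k → StalWinS G D S (k + 1)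

  /-- Position with Dominator's vertices `D`, Staller's vertices `S` and
  Dominator to move: Staller can guarantee to claim a whole closed
  neighbourhood using at most `k` further moves of her own. -/
  inductive StalWinD (G : SimpleGraph V) : Finset V → Finset V → ℕ → Prop where
    | done (D S : Finset V) (k : ℕ) : StallerWon G S → StalWinD G D S k
    | step (D S : Finset V) (k : ℕ) : (∃ v, v ∉ D ∧ v ∉ S) →
        (∀ v, v ∉ D → v ∉ S → StalWinS G (insert v D) S k) → StalWinD G D S k
end

/-- `γ_MB(G)`: minimum number of Dominator's moves with which he can guarantee
to win the D-game (Dominator moves first); `⊤` if he cannot win it. -/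
noncomputable def gammaMB (G : SimpleGraph V) : ℕ∞ :=
  sInf {k : ℕ∞ | ∃ n : ℕ, k = n ∧ DomWinD G ∅ ∅ n}

/-- `γ_MB'(G)`: minimum number of Dominator's moves with which he can guarantee
to win the S-game (Staller moves first); `⊤` if he cannot win it. -/
noncomputable def gammaMB' (G : SimpleGraph V) : ℕ∞ :=
  sInf {k : ℕ∞ | ∃ n : ℕ, k = n ∧ DomWinS G ∅ ∅ n}

/-- `γ_SMB(G)`: minimum number of Staller's moves with which she can guarantee
to win the D-game (Dominator moves first); `⊤` if she cannot win it. -/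
noncomputable def gammaSMB (G : SimpleGraph V) : ℕ∞ :=
  sInf {k : ℕ∞ | ∃ n : ℕ, k = n ∧ StalWinD G ∅ ∅ n}

/-- `γ_SMB'(G)`: minimum number of Staller's moves with which she can guarantee
to win the S-game (Staller moves first); `⊤` if she cannot win it. -/
noncomputable def gammaSMB' (G : SimpleGraph V) : ℕ∞ :=
  sInf {k : ℕ∞ | ∃ n : ℕ, k = n ∧ StalWinS G ∅ ∅ n}

/-- Outcome `𝒟`: Dominator has a winning strategy no matter who starts. -/
def OutcomeD (G : SimpleGraph V) : Prop :=
  (∃ n, DomWinD G ∅ ∅ n) ∧ (∃ n, DomWinS G ∅ ∅ n)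

/-- Outcome `𝒮`: Staller has a winning strategy no matter who starts. -/
def OutcomeS (G : SimpleGraph V) : Prop :=
  (∃ n, StalWinD G ∅ ∅ n) ∧ (∃ n, StalWinS G ∅ ∅ n)

/-- Outcome `𝒩`: the first player has a winning strategy. -/
def OutcomeN (G : SimpleGraph V) : Prop :=
  (∃ n, DomWinD G ∅ ∅ n) ∧ (∃ n, StalWinS G ∅ ∅ n)

end Game

/-- The corona product `G ⊙ H`: one copy of `G`, a copy of `H` for every
vertex of `G`, and the `i`-th vertex of `G` joined to every vertex of the
`i`-th copy of `H`. -/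
def coronaProd {α β : Type*} (G : SimpleGraph α) (H : SimpleGraph β) :
    SimpleGraph (α ⊕ α × β) where
  Adj x y :=
    match x, y with
    | Sum.inl a, Sum.inl a' => G.Adj a a'
    | Sum.inl a, Sum.inr p => a = p.1
    | Sum.inr p, Sum.inl a => a = p.1
    | Sum.inr p, Sum.inr q => p.1 = q.1 ∧ H.Adj p.2 q.2
  symm := ⟨by
    rintro (a | p) (a' | q) h
    · exact G.adj_symm h
    · exact h
    · exact h
    · exact ⟨h.1.symm, H.adj_symm h.2⟩⟩
  loopless := ⟨by
    rintro (a | p) h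
    · exact G.irrefl h
    · exact H.irrefl h.2⟩

/-- The domination number `γ(G)` of a finite graph. -/
noncomputable def domNumber {V : Type*} [Fintype V] (G : SimpleGraph V) : ℕ :=
  sInf {n : ℕ | ∃ D : Finset V, D.card = n ∧ IsDomSet G D}

/-- `v` is a dominating vertex: it is adjacent to all other vertices. -/
def IsDomVertex {V : Type*} (G : SimpleGraph V) (v : V) : Prop :=
  ∀ u, u ≠ v → G.Adj v u

/-- `v` is an isolated vertex (degree `0`). -/
def IsIsolatedVertex {V : Type*} (G : SimpleGraph V) (v : V) : Prop :=
  ∀ u, ¬ G.Adj v u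

/-- `v` is a leaf (degree `1`). -/
def IsLeaf {V : Type*} (G : SimpleGraph V) (v : V) : Prop :=
  ∃! u, G.Adj v u

/-- `v` is a strong support vertex: adjacent to at least two leaves. -/
def IsStrongSupport {V : Type*} (G : SimpleGraph V) (v : V) : Prop :=
  ∃ u w, u ≠ w ∧ G.Adj v u ∧ G.Adj v w ∧ IsLeaf G u ∧ IsLeaf G w

/-!
Dominating `G ⊙ H` only asks, for every vertex `a` of `G`, for `a` itself or for a dominating
set of the `a`-th copy of `H`: the edges of `G` play no role, and the game splits into `n(G)`
local games on the copies of `K₁ ∨ H`.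

Upper bound: Dominator answers each move of Staller in the copy she played in, with `a` if she
entered the copy of `H` and with his optimal D-game strategy on `H` if she took `a`; a move of
hers in a settled copy gives him a free move elsewhere. Each copy costs him at most `γ_MB(H)`.

Lower bound: Staller first claims the `G`-vertices one at a time. As she wins the S-game on `H`,
Dominator has to answer each of these moves inside that copy of `H`, after which he needs
`γ_MB(H)` moves there as long as Staller keeps answering him there. Then she *armors* copies by
answering in them. Dominator can spoil an unarmored copy by moving in it, but Staller answers by
re-armoring the copy he attacked, or else by armoring a new one. So the potential `2|A| + |U|`
of armored and unarmored copies never drops below `n(G)`: at least `⌈n(G)/2⌉` copies cost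
Dominator `γ_MB(H)` moves, and every copy costs him at least `γ(H)`.
-/

section Game

variable {V : Type*} {G : SimpleGraph V}

theorem IsDomSet.mono {D D' : Finset V} (h : IsDomSet G D) (hD : D ⊆ D') : IsDomSet G D' :=
  fun v => (h v).imp (fun hv => hD hv) fun ⟨u, hu, huv⟩ => ⟨u, hD hu, huv⟩

theorem not_isDomSet_empty [Nonempty V] : ¬ IsDomSet G ∅ := fun h => by
  obtain ⟨v⟩ := ‹Nonempty V›
  simpa using h v

theorem domNumber_le_card [Fintype V] {D : Finset V} (hD : IsDomSet G D) :
    domNumber G ≤ D.card :=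
  Nat.sInf_le ⟨D, rfl, hD⟩

theorem StallerWon.mono {S S' : Finset V} (h : StallerWon G S) (hS : S ⊆ S') :
    StallerWon G S' :=
  let ⟨v, hv, hN⟩ := h
  ⟨v, hS hv, fun u hu => hS (hN u hu)⟩

theorem StallerWon.not_isDomSet {D S : Finset V} (h : StallerWon G S) (hDS : Disjoint D S) :
    ¬ IsDomSet G D := fun hD => by
  obtain ⟨v, hv, hN⟩ := h
  rcases hD v with hvD | ⟨u, hu, huv⟩
  · exact Finset.disjoint_left.1 hDS hvD hv
  · exact Finset.disjoint_left.1 hDS hu (hN u huv.symm)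

variable [DecidableEq V]

mutual

theorem DomWinD.mono_staller {D S S' : Finset V} {k : ℕ} (h : DomWinD G D S k)
    (hS : S' ⊆ S) : DomWinD G D S' k :=
  match h with
  | .done _ _ _ hD => .done _ _ _ hD
  | .step _ _ _ v hvD hvS h' => .step _ _ _ v hvD (fun hv => hvS (hS hv)) (h'.mono_staller hS)

theorem DomWinS.mono_staller {D S S' : Finset V} {k : ℕ} (h : DomWinS G D S k)
    (hS : S' ⊆ S) : DomWinS G D S' k :=
  match h with
  | .done _ _ _ hD => .done _ _ _ hD
  | .step _ _ _ ⟨w, hwD, hwS⟩ h' => by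
    refine .step _ _ _ ⟨w, hwD, fun hw => hwS (hS hw)⟩ fun x hxD hxS => ?_
    by_cases hx : x ∈ S
    · exact (h' w hwD hwS).mono_staller (Finset.insert_subset (Finset.mem_insert_of_mem hx)
        (hS.trans (Finset.subset_insert _ _)))
    · exact (h' x hxD hx).mono_staller (Finset.insert_subset_insert _ hS)

end

mutual

theorem DomWinD.mono_budget {D S : Finset V} {k k' : ℕ} (h : DomWinD G D S k) (hk : k ≤ k') :
    DomWinD G D S k' :=
  match h with
  | .done _ _ _ hD => .done _ _ _ hD
  | .step _ _ j v hvD hvS h' => by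
    obtain ⟨j', rfl⟩ : ∃ j', k' = j' + 1 := ⟨k' - 1, by omega⟩
    exact .step _ _ _ v hvD hvS (h'.mono_budget (by omega))

theorem DomWinS.mono_budget {D S : Finset V} {k k' : ℕ} (h : DomWinS G D S k) (hk : k ≤ k') :
    DomWinS G D S k' :=
  match h with
  | .done _ _ _ hD => .done _ _ _ hD
  | .step _ _ _ hfree h' => .step _ _ _ hfree fun w hwD hwS => (h' w hwD hwS).mono_budget hk

end

theorem DomWinD.pos {D S : Finset V} {k : ℕ} (h : DomWinD G D S k) (hD : ¬ IsDomSet G D) :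
    0 < k := by
  cases h with
  | done _ _ _ h => exact absurd h hD
  | step => omega

theorem DomWinS.domWinD {D S : Finset V} {k : ℕ} (h : DomWinS G D S k) : DomWinD G D S k :=
  match h with
  | .done _ _ _ hD => .done _ _ _ hD
  | .step _ _ _ ⟨w, hwD, hwS⟩ h' => (h' w hwD hwS).mono_staller (Finset.subset_insert _ _)

theorem DomWinS.exists_move {D S : Finset V} {k : ℕ} (h : DomWinS G D S k)
    (hD : ¬ IsDomSet G D) :
    ∃ v, v ∉ D ∧ v ∉ S ∧ ∃ j, k = j + 1 ∧ DomWinS G (insert v D) S j := by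
  cases h.domWinD with
  | done _ _ _ h' => exact absurd h' hD
  | step _ _ j v hvD hvS h' => exact ⟨v, hvD, hvS, j, rfl, h'⟩

mutual

theorem DomWinD.domNumber_le [Fintype V] {D S : Finset V} {r : ℕ} (h : DomWinD G D S r) :
    domNumber G ≤ D.card + r :=
  match h with
  | .done _ _ _ hD => (domNumber_le_card hD).trans (Nat.le_add_right _ _)
  | .step _ _ _ v hvD _ h' => by
    have := h'.domNumber_le
    rw [Finset.card_insert_of_notMem hvD] at this
    omega

theorem DomWinS.domNumber_le [Fintype V] {D S : Finset V} {r : ℕ} (h : DomWinS G D S r) :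
    domNumber G ≤ D.card + r :=
  match h with
  | .done _ _ _ hD => (domNumber_le_card hD).trans (Nat.le_add_right _ _)
  | .step _ _ _ ⟨w, hwD, hwS⟩ h' => (h' w hwD hwS).domNumber_le

end

mutual

theorem StalWinS.mono_dom {D D' S : Finset V} {σ : ℕ} (h : StalWinS G D S σ) (hD : D' ⊆ D) :
    StalWinS G D' S σ :=
  match h with
  | .done _ _ _ hS => .done _ _ _ hS
  | .step _ _ _ w hwD hwS h' => .step _ _ _ w (fun hw => hwD (hD hw)) hwS (h'.mono_dom hD)

theorem StalWinD.mono_dom {D D' S : Finset V} {σ : ℕ} (h : StalWinD G D S σ) (hD : D' ⊆ D) :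
    StalWinD G D' S σ :=
  match h with
  | .done _ _ _ hS => .done _ _ _ hS
  | .step _ _ _ ⟨v, hvD, hvS⟩ h' => by
    refine .step _ _ _ ⟨v, fun hv => hvD (hD hv), hvS⟩ fun x hxD hxS => ?_
    by_cases hx : x ∈ D
    · exact (h' v hvD hvS).mono_dom (Finset.insert_subset (Finset.mem_insert_of_mem hx)
        (hD.trans (Finset.subset_insert _ _)))
    · exact (h' x hx hxS).mono_dom (Finset.insert_subset_insert _ hD)

end

theorem StalWinD.stalWinS {D S : Finset V} {σ : ℕ} (h : StalWinD G D S σ) : StalWinS G D S σ :=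
  match h with
  | .done _ _ _ hS => .done _ _ _ hS
  | .step _ _ _ ⟨v, hvD, hvS⟩ h' => (h' v hvD hvS).mono_dom (Finset.subset_insert _ _)

theorem StalWinD.insert_dom {D S : Finset V} {σ : ℕ} (h : StalWinD G D S σ) {v : V}
    (hvD : v ∉ D) (hvS : v ∉ S) : StalWinS G (insert v D) S σ :=
  match h with
  | .done _ _ _ hS => .done _ _ _ hS
  | .step _ _ _ _ h' => h' v hvD hvS

theorem StalWinS.stallerWon_or_exists_move {D S : Finset V} {σ : ℕ} (h : StalWinS G D S σ) :
    StallerWon G S ∨ ∃ w, w ∉ D ∧ w ∉ S ∧ ∃ σ', StalWinD G D (insert w S) σ' :=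
  match h with
  | .done _ _ _ hS => .inl hS
  | .step _ _ _ w hwD hwS h' => .inr ⟨w, hwD, hwS, _, h'⟩

theorem StalWinS.nonempty {D S : Finset V} {σ : ℕ} (h : StalWinS G D S σ) : Nonempty V :=
  match h with
  | .done _ _ _ ⟨v, _⟩ => ⟨v⟩
  | .step _ _ _ w _ _ _ => ⟨w⟩

mutual

theorem StalWinS.not_isDomSet {D S : Finset V} {σ : ℕ} (h : StalWinS G D S σ)
    (hDS : Disjoint D S) : ¬ IsDomSet G D :=
  match h with
  | .done _ _ _ hS => hS.not_isDomSet hDS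
  | .step _ _ _ _ hwD _ h' => h'.not_isDomSet (Finset.disjoint_insert_right.2 ⟨hwD, hDS⟩)

theorem StalWinD.not_isDomSet {D S : Finset V} {σ : ℕ} (h : StalWinD G D S σ)
    (hDS : Disjoint D S) : ¬ IsDomSet G D :=
  match h with
  | .done _ _ _ hS => hS.not_isDomSet hDS
  | .step _ _ _ ⟨v, hvD, hvS⟩ h' => fun hD =>
    (h' v hvD hvS).not_isDomSet (Finset.disjoint_insert_left.2 ⟨hvS, hDS⟩)
      (hD.mono (Finset.subset_insert _ _))

end

theorem gammaMB_eq {k : ℕ} (hk : DomWinD G ∅ ∅ k)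
    (hmin : ∀ m, DomWinD G ∅ ∅ m → k ≤ m) : gammaMB G = k :=
  le_antisymm (sInf_le ⟨k, rfl, hk⟩) <| le_sInf <| by
    rintro _ ⟨m, rfl, hm⟩
    exact_mod_cast hmin m hm

theorem gammaMB'_le {m : ℕ} (h : DomWinS G ∅ ∅ m) : gammaMB' G ≤ m :=
  sInf_le ⟨m, rfl, h⟩

theorem le_gammaMB' {M : ℕ} (h : ∀ m, DomWinS G ∅ ∅ m → M ≤ m) :
    (M : ℕ∞) ≤ gammaMB' G :=
  le_sInf <| by
    rintro _ ⟨m, rfl, hm⟩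
    exact_mod_cast h m hm

def NeedsD (G : SimpleGraph V) (k : ℕ) (D S : Finset V) : Prop :=
  ∀ r, DomWinD G D S r → k ≤ D.card + r

def NeedsS (G : SimpleGraph V) (k : ℕ) (D S : Finset V) : Prop :=
  ∀ r, DomWinS G D S r → k ≤ D.card + r

variable {k : ℕ} {D S : Finset V}

theorem NeedsD.insert (h : NeedsD G k D S) {v : V} (hvD : v ∉ D) (hvS : v ∉ S) :
    NeedsS G k (insert v D) S := fun r hr => by
  have := h (r + 1) (.step _ _ _ v hvD hvS hr)
  rw [Finset.card_insert_of_notMem hvD]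
  omega

theorem NeedsD.mono_staller (h : NeedsD G k D S) {S' : Finset V} (hS : S ⊆ S') :
    NeedsD G k D S' := fun r hr => h r (hr.mono_staller hS)

theorem NeedsS.mono_staller (h : NeedsS G k D S) {S' : Finset V} (hS : S ⊆ S') :
    NeedsS G k D S' := fun r hr => h r (hr.mono_staller hS)

theorem NeedsD.le_card (h : NeedsD G k D S) (hD : IsDomSet G D) : k ≤ D.card :=
  h 0 (.done _ _ _ hD)

theorem NeedsS.le_card (h : NeedsS G k D S) (hD : IsDomSet G D) : k ≤ D.card :=
  h 0 (.done _ _ _ hD)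

theorem NeedsS.exists_needsD (h : NeedsS G k D S) :
    (∃ w, w ∉ D ∧ w ∉ S ∧ NeedsD G k D (insert w S)) ∨ NeedsD G k D S := by
  by_cases hfree : ∃ w, w ∉ D ∧ w ∉ S
  · left
    by_contra! hcheap
    -- otherwise Dominator wins within `k - 1 - |D|` moves whatever Staller plays
    have hcheap' : ∀ w, w ∉ D → w ∉ S →
        D.card < k ∧ DomWinD G D (insert w S) (k - 1 - D.card) := by
      intro w hwD hwS
      obtain ⟨r, hr, hrk⟩ : ∃ r, DomWinD G D (insert w S) r ∧ D.card + r < k := by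
        simpa [NeedsD] using hcheap w hwD hwS
      exact ⟨by omega, hr.mono_budget (by omega)⟩
    have hwin := h _ (.step _ _ _ hfree fun w hwD hwS => (hcheap' w hwD hwS).2)
    obtain ⟨w, hwD, hwS⟩ := hfree
    have := (hcheap' w hwD hwS).1
    omega
  · right
    intro r hr
    cases hr with
    | done _ _ _ hD => exact h r (.done _ _ _ hD)
    | step _ _ _ v hvD hvS _ => exact absurd ⟨v, hvD, hvS⟩ hfree

end Game

theorem sum_update_lt_sum {ι : Type*} [Fintype ι] [DecidableEq ι] {f : ι → ℕ} {i : ι}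
    {m : ℕ} (hm : m < f i) : ∑ j, Function.update f i m j < ∑ j, f j := by
  rw [Finset.sum_update_of_mem (Finset.mem_univ i), Finset.sdiff_singleton_eq_erase,
    ← Finset.add_sum_erase _ _ (Finset.mem_univ i)]
  omega

theorem card_div_two_mul_add_le_sum {ι : Type*} [Fintype ι] {f : ι → ℕ} {T : Finset ι}
    {g k : ℕ} (hgk : g ≤ k) (hg : ∀ i, g ≤ f i) (hk : ∀ i ∈ T, k ≤ f i)
    (hT : Fintype.card ι ≤ 2 * T.card) :
    Fintype.card ι / 2 * g + (Fintype.card ι + 1) / 2 * k ≤ ∑ i, f i := by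
  classical
  set n := Fintype.card ι
  have hTk : T.card * k ≤ ∑ i ∈ T, f i := by simpa using Finset.card_nsmul_le_sum T f k hk
  have hTg : Tᶜ.card * g ≤ ∑ i ∈ Tᶜ, f i := by
    simpa using Finset.card_nsmul_le_sum Tᶜ f g fun i _ => hg i
  obtain ⟨e, he⟩ : ∃ e, T.card = (n + 1) / 2 + e := ⟨T.card - (n + 1) / 2, by omega⟩
  have hc : n / 2 = Tᶜ.card + e := by
    rw [Finset.card_compl]
    have := T.card_le_univ
    omega
  calc n / 2 * g + (n + 1) / 2 * k
      ≤ Tᶜ.card * g + T.card * k := by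
        rw [hc, he, add_mul, add_mul]
        nlinarith [Nat.mul_le_mul_left e hgk]
    _ ≤ ∑ i, f i := by
        rw [← Finset.sum_add_sum_compl T f]
        omega

namespace coronaProd

variable {α β : Type*} {G : SimpleGraph α} {H : SimpleGraph β}

/-- The `a`-th copy of `K₁ ∨ H` in `G ⊙ H` consists of `a` and the `a`-th copy of `H`. -/
def copyIndex : α ⊕ α × β → α := Sum.elim id Prod.fst

noncomputable def fiber (a : α) (D : Finset (α ⊕ α × β)) : Finset β :=
  D.preimage (fun b => .inr (a, b)) fun _ _ _ _ h => by simpa using h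

@[simp] theorem mem_fiber {a : α} {D : Finset (α ⊕ α × β)} {b : β} :
    b ∈ fiber a D ↔ .inr (a, b) ∈ D :=
  Finset.mem_preimage

@[simp] theorem fiber_empty (a : α) : fiber a (∅ : Finset (α ⊕ α × β)) = ∅ := by
  ext; simp

theorem fiber_mono {a : α} {D D' : Finset (α ⊕ α × β)} (h : D ⊆ D') :
    fiber a D ⊆ fiber a D' :=
  fun _ hb => mem_fiber.2 (h (mem_fiber.1 hb))

theorem disjoint_fiber {a : α} {D S : Finset (α ⊕ α × β)} (h : Disjoint D S) :
    Disjoint (fiber a D) (fiber a S) :=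
  Finset.disjoint_left.2 fun _ hD hS =>
    Finset.disjoint_left.1 h (mem_fiber.1 hD) (mem_fiber.1 hS)

theorem sum_card_fiber_le [Fintype α] (D : Finset (α ⊕ α × β)) :
    ∑ a, (fiber a D).card ≤ D.card := by
  rw [← Finset.card_sigma]
  refine Finset.card_le_card_of_injOn (fun p => .inr (p.1, p.2)) (fun p hp => ?_) ?_
  · simpa using hp
  · rintro ⟨a, b⟩ - ⟨a', b'⟩ - h
    simp only [Sum.inr.injEq, Prod.mk.injEq] at h
    obtain ⟨rfl, rfl⟩ := h
    rfl

theorem isDomSet_iff [Nonempty β] {D : Finset (α ⊕ α × β)} :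
    IsDomSet (coronaProd G H) D ↔ ∀ a, .inl a ∈ D ∨ IsDomSet H (fiber a D) := by
  constructor
  · intro hD a
    refine or_iff_not_imp_left.2 fun ha b => ?_
    rcases hD (.inr (a, b)) with hb | ⟨u | ⟨a', u⟩, hu, hub⟩
    · exact .inl (mem_fiber.2 hb)
    · obtain rfl : u = a := hub
      exact absurd hu ha
    · obtain ⟨rfl, hub⟩ := hub
      exact .inr ⟨u, mem_fiber.2 hu, hub⟩
  · rintro hD (a | ⟨a, b⟩)
    · refine (hD a).imp id fun ha => ?_
      obtain ⟨b⟩ := ‹Nonempty β›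
      obtain ⟨u, hu⟩ : ∃ u, u ∈ fiber a D := by
        rcases ha b with hb | ⟨u, hu, -⟩
        exacts [⟨b, hb⟩, ⟨u, hu⟩]
      exact ⟨.inr (a, u), mem_fiber.1 hu, rfl⟩
    · rcases hD a with ha | ha
      · exact .inr ⟨.inl a, ha, rfl⟩
      · exact (ha b).imp mem_fiber.1 fun ⟨u, hu, hub⟩ =>
          ⟨.inr (a, u), mem_fiber.1 hu, rfl, hub⟩

theorem isDomSet_fiber [Nonempty β] {D : Finset (α ⊕ α × β)}
    (hD : IsDomSet (coronaProd G H) D) {a : α} (ha : .inl a ∉ D) : IsDomSet H (fiber a D) :=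
  (isDomSet_iff.1 hD a).resolve_left ha

variable [DecidableEq α] [DecidableEq β]

@[simp] theorem fiber_insert_inl (a a' : α) (D : Finset (α ⊕ α × β)) :
    fiber a (insert (.inl a') D) = fiber a D := by
  ext; simp

@[simp] theorem fiber_insert_inr_self (a : α) (b : β) (D : Finset (α ⊕ α × β)) :
    fiber a (insert (.inr (a, b)) D) = insert b (fiber a D) := by
  ext; simp

theorem fiber_insert_of_ne {a : α} {x : α ⊕ α × β} (hx : copyIndex x ≠ a)
    (D : Finset (α ⊕ α × β)) : fiber a (insert x D) = fiber a D := by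
  ext b
  simp only [mem_fiber, Finset.mem_insert, or_iff_right_iff_imp]
  rintro rfl
  exact absurd rfl hx

theorem fiber_insert_inr_of_ne {a c : α} (h : c ≠ a) (u : β) (D : Finset (α ⊕ α × β)) :
    fiber a (insert (.inr (c, u)) D) = fiber a D :=
  fiber_insert_of_ne (x := .inr (c, u)) h D

theorem inl_mem_insert_of_ne {a : α} {x : α ⊕ α × β} (hx : copyIndex x ≠ a)
    {D : Finset (α ⊕ α × β)} : .inl a ∈ insert x D ↔ .inl a ∈ D := by
  simp only [Finset.mem_insert, or_iff_right_iff_imp]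
  rintro rfl
  exact absurd rfl hx

section Upper

/-- Dominator's invariant in the S-game, at Staller's turn: `m` of his moves are reserved for
the `a`-th copy. -/
def CopyWithin (H : SimpleGraph β) (D S : Finset (α ⊕ α × β)) (a : α) (m : ℕ) : Prop :=
  .inl a ∈ D ∨
    (.inl a ∉ S ∧ fiber a D = ∅ ∧ fiber a S = ∅ ∧ DomWinD H ∅ ∅ m) ∨
    (.inl a ∈ S ∧ DomWinS H (fiber a D) (fiber a S) m)

def CanAdvance (H : SimpleGraph β) (D S : Finset (α ⊕ α × β)) (a : α) (m : ℕ) : Prop :=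
  ∃ v, copyIndex v = a ∧ v ∉ D ∧ v ∉ S ∧ ∃ m' < m, CopyWithin H (insert v D) S a m'

variable {D S : Finset (α ⊕ α × β)} {a : α} {m : ℕ}

theorem CopyWithin.insert_dom_of_ne (h : CopyWithin H D S a m) {v : α ⊕ α × β}
    (hv : copyIndex v ≠ a) : CopyWithin H (insert v D) S a m := by
  simpa only [CopyWithin, fiber_insert_of_ne hv, inl_mem_insert_of_ne hv] using h

theorem CopyWithin.insert_staller_of_ne (h : CopyWithin H D S a m) {x : α ⊕ α × β}
    (hx : copyIndex x ≠ a) : CopyWithin H D (insert x S) a m := by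
  simpa only [CopyWithin, fiber_insert_of_ne hx, inl_mem_insert_of_ne hx] using h

variable [Nonempty β]

theorem CopyWithin.canAdvance (h : CopyWithin H D S a m)
    (ha : ¬ (.inl a ∈ D ∨ IsDomSet H (fiber a D))) : CanAdvance H D S a m := by
  rw [not_or] at ha
  rcases h with hD | ⟨haS, -, -, hk⟩ | ⟨haS, hwin⟩
  · exact absurd hD ha.1
  · exact ⟨.inl a, rfl, ha.1, haS, 0, hk.pos not_isDomSet_empty,
      .inl (Finset.mem_insert_self _ _)⟩
  · obtain ⟨u, huD, huS, j, rfl, hj⟩ := hwin.exists_move ha.2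
    refine ⟨.inr (a, u), rfl, by simpa using huD, by simpa using huS, j, j.lt_succ_self,
      .inr (.inr ⟨haS, ?_⟩)⟩
    simpa using hj

theorem CopyWithin.staller_move (h : CopyWithin H D S a m) {x : α ⊕ α × β}
    (hx : copyIndex x = a) (hxD : x ∉ D) (hxS : x ∉ S) :
    CopyWithin H D (insert x S) a m ∨ CanAdvance H D (insert x S) a m := by
  rcases h with hD | ⟨haS, hD, hS, hk⟩ | ⟨haS, hwin⟩
  · exact .inl (.inl hD)
  · rcases x with x | ⟨x, b⟩ <;> obtain rfl : a = x := hx.symm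
    · cases hk with
      | done _ _ _ h => exact absurd h not_isDomSet_empty
      | step _ _ j u _ _ hj =>
        refine .inr ⟨.inr (a, u), rfl, fun h => Finset.notMem_empty u (hD ▸ mem_fiber.2 h),
          fun h => Finset.notMem_empty u (hS ▸ mem_fiber.2 (by simpa using h)), j,
          j.lt_succ_self, .inr (.inr ⟨Finset.mem_insert_self _ _, ?_⟩)⟩
        simpa [hD, hS] using hj
    · by_cases haD : .inl a ∈ D
      · exact .inl (.inl haD)
      · exact .inr ⟨.inl a, rfl, haD, by simpa using haS, 0, hk.pos not_isDomSet_empty,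
          .inl (Finset.mem_insert_self _ _)⟩
  · rcases x with x | ⟨x, b⟩ <;> obtain rfl : a = x := hx.symm
    · exact absurd haS hxS
    have hbD : b ∉ fiber a D := by simpa using hxD
    have hbS : b ∉ fiber a S := by simpa using hxS
    have local_done (hD : IsDomSet H (fiber a D)) :
        CopyWithin H D (insert (.inr (a, b)) S) a m :=
      .inr (.inr ⟨Finset.mem_insert_of_mem haS, .done _ _ _ hD⟩)
    cases hwin with
    | done _ _ _ hD => exact .inl (local_done hD)
    | step _ _ _ _ hall =>
      cases hall b hbD hbS with
      | done _ _ _ hD => exact .inl (local_done hD)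
      | step _ _ j u huD huS hj =>
        refine .inr ⟨.inr (a, u), rfl, by simpa using huD, by simpa using huS, j,
          j.lt_succ_self, .inr (.inr ⟨Finset.mem_insert_of_mem haS, ?_⟩)⟩
        simpa using hj

theorem exists_canAdvance {f : α → ℕ} (h : ∀ a, CopyWithin H D S a (f a))
    (hD : ¬ IsDomSet (coronaProd G H) D) : ∃ a, CanAdvance H D S a (f a) := by
  obtain ⟨a, ha⟩ := not_forall.1 (mt isDomSet_iff.2 hD)
  exact ⟨a, (h a).canAdvance ha⟩

theorem domWinS_of_copyWithin [Fintype α] {B : ℕ} {D S : Finset (α ⊕ α × β)}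
    {f : α → ℕ} (hf : ∀ a, CopyWithin H D S a (f a)) (hB : ∑ a, f a ≤ B) :
    DomWinS (coronaProd G H) D S B := by
  induction B using Nat.strong_induction_on generalizing D S f with
  | _ B ih =>
  have reply {S' : Finset (α ⊕ α × β)} {c : α} (hf' : ∀ a ≠ c, CopyWithin H D S' a (f a))
      (hc : CanAdvance H D S' c (f c)) : DomWinD (coronaProd G H) D S' B := by
    obtain ⟨v, rfl, hvD, hvS, m', hm', hv⟩ := hc
    have hlt := sum_update_lt_sum hm'
    obtain ⟨B', rfl⟩ : ∃ B', B = B' + 1 := ⟨B - 1, by omega⟩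
    refine .step _ _ _ v hvD hvS (ih B' B'.lt_succ_self (f := Function.update f (copyIndex v) m') ?_
      (by omega))
    intro a
    rcases eq_or_ne a (copyIndex v) with rfl | ha
    · simpa using hv
    · simpa [ha] using (hf' a ha).insert_dom_of_ne (Ne.symm ha)
  by_cases hD : IsDomSet (coronaProd G H) D
  · exact .done _ _ _ hD
  obtain ⟨-, v, -, hvD, hvS, -⟩ := exists_canAdvance hf hD
  refine .step _ _ _ ⟨v, hvD, hvS⟩ fun x hxD hxS => ?_
  have hother (a) (ha : a ≠ copyIndex x) : CopyWithin H D (insert x S) a (f a) :=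
    (hf a).insert_staller_of_ne (Ne.symm ha)
  rcases (hf (copyIndex x)).staller_move rfl hxD hxS with hx | hx
  · have hall (a) : CopyWithin H D (insert x S) a (f a) := by
      rcases eq_or_ne a (copyIndex x) with rfl | ha
      exacts [hx, hother a ha]
    obtain ⟨c, hc⟩ := exists_canAdvance hall hD
    exact reply (fun a _ => hall a) hc
  · exact reply hother hx

theorem domWinS_card_mul [Fintype α] {k : ℕ} (hk : DomWinD H ∅ ∅ k) :
    DomWinS (coronaProd G H) ∅ ∅ (Fintype.card α * k) :=
  domWinS_of_copyWithin (f := fun _ => k) (fun _ => .inr (.inl ⟨by simp, by simp, by simp, hk⟩))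
    (by simp)

end Upper

section Punish

variable [Nonempty β]

mutual

/-- Staller answers Dominator's moves in the copy of `a` locally; any other move of his gives
her a free extra move there. -/
theorem not_domWinD_of_stalWinD_fiber {D S : Finset (α ⊕ α × β)} {B σ : ℕ} {a : α}
    (ha : .inl a ∈ S) (hDS : Disjoint D S) (hσ : StalWinD H (fiber a D) (fiber a S) σ) :
    ¬ DomWinD (coronaProd G H) D S B := fun h =>
  match h with
  | .done _ _ _ hD =>
    hσ.not_isDomSet (disjoint_fiber hDS) (isDomSet_fiber hD (Finset.disjoint_right.1 hDS ha))
  | .step _ _ _ v hvD hvS h' => by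
    have hDS' : Disjoint (insert v D) S := Finset.disjoint_insert_left.2 ⟨hvS, hDS⟩
    by_cases hv : copyIndex v = a
    · rcases v with a' | ⟨a', u⟩ <;> obtain rfl : a = a' := hv.symm
      · exact hvS ha
      · have hσ' := hσ.insert_dom (v := u) (by simpa using hvD) (by simpa using hvS)
        exact not_domWinS_of_stalWinS_fiber ha hDS' (by simpa using hσ') h'
    · refine not_domWinS_of_stalWinS_fiber (σ := σ) ha hDS' ?_ h'
      rw [fiber_insert_of_ne hv]
      exact hσ.stalWinS

theorem not_domWinS_of_stalWinS_fiber {D S : Finset (α ⊕ α × β)} {B σ : ℕ} {a : α}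
    (ha : .inl a ∈ S) (hDS : Disjoint D S) (hσ : StalWinS H (fiber a D) (fiber a S) σ) :
    ¬ DomWinS (coronaProd G H) D S B := fun h =>
  match h with
  | .done _ _ _ hD =>
    hσ.not_isDomSet (disjoint_fiber hDS) (isDomSet_fiber hD (Finset.disjoint_right.1 hDS ha))
  | .step _ _ _ ⟨w₀, hw₀D, hw₀S⟩ h' => by
    rcases hσ.stallerWon_or_exists_move with hwon | ⟨w, hwD, hwS, σ', hσ'⟩
    · exact not_domWinD_of_stalWinD_fiber (Finset.mem_insert_of_mem ha)
        (Finset.disjoint_insert_right.2 ⟨hw₀D, hDS⟩)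
        (.done _ _ 0 (hwon.mono (fiber_mono (Finset.subset_insert _ _)))) (h' w₀ hw₀D hw₀S)
    · have hwD' : .inr (a, w) ∉ D := by simpa using hwD
      exact not_domWinD_of_stalWinD_fiber (Finset.mem_insert_of_mem ha)
        (Finset.disjoint_insert_right.2 ⟨hwD', hDS⟩) (by simpa using hσ')
        (h' _ hwD' (by simpa using hwS))

end

end Punish

section Armor

variable {k : ℕ}

/-- Staller's invariant at Dominator's turn, once she owns all `G`-vertices. -/
structure StallerPos (H : SimpleGraph β) (k : ℕ) (D S : Finset (α ⊕ α × β))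
    (A U : Finset α) : Prop where
  disjoint : Disjoint D S
  inl_mem : ∀ a, .inl a ∈ S
  disjoint_armored : Disjoint A U
  armored : ∀ a ∈ A, NeedsD H k (fiber a D) (fiber a S)
  unarmored : ∀ a ∈ U, NeedsS H k (fiber a D) (fiber a S)

variable {D S : Finset (α ⊕ α × β)} {A U : Finset α}

theorem StallerPos.insert_staller (h : StallerPos H k D S A U) {w : α ⊕ α × β}
    (hw : w ∉ D) : StallerPos H k D (insert w S) A U where
  disjoint := Finset.disjoint_insert_right.2 ⟨hw, h.disjoint⟩
  inl_mem a := Finset.mem_insert_of_mem (h.inl_mem a)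
  disjoint_armored := h.disjoint_armored
  armored a ha := (h.armored a ha).mono_staller (fiber_mono (Finset.subset_insert _ _))
  unarmored a ha := (h.unarmored a ha).mono_staller (fiber_mono (Finset.subset_insert _ _))

theorem StallerPos.armor (h : StallerPos H k D S A U) {t : α} (ht : t ∈ U)
    (hfree : ∃ x, x ∉ D ∧ x ∉ S) :
    ∃ w, w ∉ D ∧ w ∉ S ∧ StallerPos H k D (insert w S) (insert t A) (U.erase t) := by
  obtain ⟨w, hwD, hwS, hw⟩ :
      ∃ w, w ∉ D ∧ w ∉ S ∧ NeedsD H k (fiber t D) (fiber t (insert w S)) := by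
    rcases (h.unarmored t ht).exists_needsD with ⟨b, hbD, hbS, hb⟩ | hb
    · exact ⟨.inr (t, b), by simpa using hbD, by simpa using hbS, by simpa using hb⟩
    · obtain ⟨x, hxD, hxS⟩ := hfree
      exact ⟨x, hxD, hxS, hb.mono_staller (fiber_mono (Finset.subset_insert _ _))⟩
  have h' := h.insert_staller hwD
  refine ⟨w, hwD, hwS, h'.disjoint, h'.inl_mem, ?_, ?_,
    fun a ha => h'.unarmored a (Finset.mem_of_mem_erase ha)⟩
  · rw [Finset.disjoint_insert_left]
    exact ⟨Finset.notMem_erase _ _, h.disjoint_armored.mono_right (Finset.erase_subset _ _)⟩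
  · intro a ha
    rcases Finset.mem_insert.1 ha with rfl | ha
    exacts [hw, h'.armored a ha]

theorem StallerPos.dom_move_armored (h : StallerPos H k D S A U) {c : α} {u : β}
    (hvD : .inr (c, u) ∉ D) (hvS : .inr (c, u) ∉ S) (hc : c ∈ A) :
    StallerPos H k (insert (.inr (c, u)) D) S (A.erase c) (insert c U) where
  disjoint := Finset.disjoint_insert_left.2 ⟨hvS, h.disjoint⟩
  inl_mem := h.inl_mem
  disjoint_armored := by
    rw [Finset.disjoint_insert_right]
    exact ⟨Finset.notMem_erase _ _, h.disjoint_armored.mono_left (Finset.erase_subset _ _)⟩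
  armored a ha := by
    rw [fiber_insert_inr_of_ne (Finset.ne_of_mem_erase ha).symm]
    exact h.armored a (Finset.mem_of_mem_erase ha)
  unarmored a ha := by
    rcases Finset.mem_insert.1 ha with rfl | ha
    · simpa using (h.armored a hc).insert (v := u) (by simpa using hvD) (by simpa using hvS)
    · have hac : c ≠ a := fun hca => Finset.disjoint_right.1 h.disjoint_armored ha (hca ▸ hc)
      rw [fiber_insert_inr_of_ne hac]
      exact h.unarmored a ha

theorem StallerPos.dom_move_of_notMem (h : StallerPos H k D S A U) {c : α} {u : β}
    (hvS : .inr (c, u) ∉ S) (hc : c ∉ A) :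
    StallerPos H k (insert (.inr (c, u)) D) S A (U.erase c) where
  disjoint := Finset.disjoint_insert_left.2 ⟨hvS, h.disjoint⟩
  inl_mem := h.inl_mem
  disjoint_armored := h.disjoint_armored.mono_right (Finset.erase_subset _ _)
  armored a ha := by
    rw [fiber_insert_inr_of_ne (ne_of_mem_of_not_mem ha hc).symm]
    exact h.armored a ha
  unarmored a ha := by
    rw [fiber_insert_inr_of_ne (Finset.ne_of_mem_erase ha).symm]
    exact h.unarmored a (Finset.mem_of_mem_erase ha)

def ArmorSurplus (n : ℕ) (A U : Finset α) : Prop :=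
  n + 1 ≤ 2 * A.card + U.card ∨ U = ∅ ∧ n ≤ 2 * A.card

variable [Fintype α]

/-- Staller re-armors the copy Dominator played in if it was armored, and otherwise armors
another copy if one is left. -/
theorem StallerPos.respond (h : StallerPos H k D S A U)
    (hcount : ArmorSurplus (Fintype.card α) A U)
    {c : α} {u : β} (hvD : .inr (c, u) ∉ D) (hvS : .inr (c, u) ∉ S)
    (hfree : ∃ x, x ∉ insert (.inr (c, u)) D ∧ x ∉ S) :
    ∃ w, w ∉ insert (.inr (c, u)) D ∧ w ∉ S ∧ ∃ A' U',
      StallerPos H k (insert (.inr (c, u)) D) (insert w S) A' U' ∧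
      ArmorSurplus (Fintype.card α) A' U' := by
  by_cases hc : c ∈ A
  · have hcU : c ∉ U := Finset.disjoint_left.1 h.disjoint_armored hc
    obtain ⟨w, hwD, hwS, hw⟩ :=
      (h.dom_move_armored hvD hvS hc).armor (Finset.mem_insert_self c U) hfree
    rw [Finset.insert_erase hc, Finset.erase_insert hcU] at hw
    exact ⟨w, hwD, hwS, A, U, hw, hcount⟩
  have h₁ := h.dom_move_of_notMem hvS hc
  have hU := Finset.pred_card_le_card_erase (s := U) (a := c)
  unfold ArmorSurplus at hcount
  rcases (U.erase c).eq_empty_or_nonempty with hU₁ | ⟨t, ht⟩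
  · obtain ⟨x, hxD, hxS⟩ := hfree
    refine ⟨x, hxD, hxS, A, U.erase c, h₁.insert_staller hxD, Or.inr ⟨hU₁, ?_⟩⟩
    rw [hU₁, Finset.card_empty] at hU
    omega
  · obtain ⟨w, hwD, hwS, hw⟩ := h₁.armor ht hfree
    refine ⟨w, hwD, hwS, _, _, hw, Or.inl ?_⟩
    have htA : t ∉ A := Finset.disjoint_right.1 h.disjoint_armored (Finset.mem_of_mem_erase ht)
    have hUne : U ≠ ∅ := Finset.nonempty_iff_ne_empty.1 ⟨t, Finset.mem_of_mem_erase ht⟩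
    rw [Finset.card_insert_of_notMem htA, Finset.card_erase_of_mem ht]
    have := Finset.card_pos.2 ⟨t, ht⟩
    omega

variable [Fintype β] [Nonempty β]

theorem StallerPos.le_card (h : StallerPos H k D S A U) (hgk : domNumber H ≤ k)
    (hAU : Fintype.card α ≤ 2 * (A.card + U.card)) (hD : IsDomSet (coronaProd G H) D) :
    Fintype.card α / 2 * domNumber H + (Fintype.card α + 1) / 2 * k ≤ D.card := by
  have hfiber (a : α) : IsDomSet H (fiber a D) :=
    isDomSet_fiber hD (Finset.disjoint_right.1 h.disjoint (h.inl_mem a))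
  refine (card_div_two_mul_add_le_sum (T := A ∪ U) hgk (fun a => domNumber_le_card (hfiber a))
    (fun a ha => ?_) ?_).trans (sum_card_fiber_le D)
  · rcases Finset.mem_union.1 ha with ha | ha
    exacts [(h.armored a ha).le_card (hfiber a), (h.unarmored a ha).le_card (hfiber a)]
  · rwa [Finset.card_union_of_disjoint h.disjoint_armored]

theorem StallerPos.le_card_of_dom_move (h : StallerPos H k D S A U) (hgk : domNumber H ≤ k)
    (hcount : ArmorSurplus (Fintype.card α) A U)
    {c : α} {u : β} (hvD : .inr (c, u) ∉ D) (hvS : .inr (c, u) ∉ S)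
    (hD : IsDomSet (coronaProd G H) (insert (.inr (c, u)) D)) :
    Fintype.card α / 2 * domNumber H + (Fintype.card α + 1) / 2 * k ≤ D.card + 1 := by
  rw [← Finset.card_insert_of_notMem hvD]
  unfold ArmorSurplus at hcount
  by_cases hc : c ∈ A
  · have hcU : c ∉ U := Finset.disjoint_left.1 h.disjoint_armored hc
    refine (h.dom_move_armored hvD hvS hc).le_card hgk ?_ hD
    rw [Finset.card_erase_of_mem hc, Finset.card_insert_of_notMem hcU]
    have := Finset.card_pos.2 ⟨c, hc⟩
    omega
  · refine (h.dom_move_of_notMem hvS hc).le_card hgk ?_ hD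
    have := Finset.pred_card_le_card_erase (s := U) (a := c)
    rcases U.eq_empty_or_nonempty with rfl | hU
    · simp only [Finset.card_empty, add_zero, true_and] at hcount ⊢
      omega
    · have := Finset.card_pos.2 hU
      omega

theorem le_card_add_of_stallerPos (hgk : domNumber H ≤ k) {B : ℕ}
    (h : DomWinD (coronaProd G H) D S B) (hpos : StallerPos H k D S A U)
    (hcount : ArmorSurplus (Fintype.card α) A U) :
    Fintype.card α / 2 * domNumber H + (Fintype.card α + 1) / 2 * k ≤ D.card + B := by
  induction B using Nat.strong_induction_on generalizing D S A U with
  | _ B ih =>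
  cases h with
  | done _ _ _ hD =>
    refine (hpos.le_card hgk ?_ hD).trans (Nat.le_add_right _ _)
    rcases hcount with hcount | ⟨rfl, hcount⟩
    · omega
    · simpa using hcount
  | step _ _ j v hvD hvS h' =>
    rcases v with c | ⟨c, u⟩
    · exact absurd (hpos.inl_mem c) hvS
    cases h' with
    | done _ _ _ hD =>
      have := hpos.le_card_of_dom_move hgk hcount hvD hvS hD
      omega
    | step _ _ _ hfree hall =>
      obtain ⟨w, hwD, hwS, A', U', hpos', hcount'⟩ := hpos.respond hcount hvD hvS hfree
      have := ih j j.lt_succ_self (hall w hwD hwS) hpos' hcount'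
      rw [Finset.card_insert_of_notMem hvD] at this
      omega

end Armor

section Opening

variable {k : ℕ}

/-- Staller's invariant at Dominator's turn while she claims the `G`-vertices one at a time:
she has just claimed `L`, and the copies in `F` are untouched. -/
structure OpeningPos (H : SimpleGraph β) (k : ℕ) (D S : Finset (α ⊕ α × β)) (L : α)
    (F : Finset α) : Prop where
  disjoint : Disjoint D S
  inl_mem_last : .inl L ∈ S
  fiber_last_dom : fiber L D = ∅
  fiber_last_staller : fiber L S = ∅
  last_notMem : L ∉ F
  untouched : ∀ a ∈ F, .inl a ∉ D ∧ .inl a ∉ S ∧ fiber a D = ∅ ∧ fiber a S = ∅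
  opened : ∀ a, a ≠ L → a ∉ F → .inl a ∈ S ∧ NeedsS H k (fiber a D) (fiber a S)

variable {D S : Finset (α ⊕ α × β)} {L : α} {F : Finset α}

theorem OpeningPos.opened_of_dom_move (h : OpeningPos H k D S L F) (hk : NeedsD H k ∅ ∅)
    (u : β) {a : α} (ha : a ∉ F) :
    .inl a ∈ S ∧ NeedsS H k (fiber a (insert (.inr (L, u)) D)) (fiber a S) := by
  rcases eq_or_ne a L with rfl | haL
  · refine ⟨h.inl_mem_last, ?_⟩
    rw [fiber_insert_inr_self, h.fiber_last_dom, h.fiber_last_staller]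
    exact hk.insert (Finset.notMem_empty u) (Finset.notMem_empty u)
  · rw [fiber_insert_inr_of_ne haL.symm]
    exact h.opened a haL ha

theorem OpeningPos.claim_next (h : OpeningPos H k D S L F) (hk : NeedsD H k ∅ ∅)
    {u : β} (hvS : .inr (L, u) ∉ S) {a : α} (ha : a ∈ F) :
    OpeningPos H k (insert (.inr (L, u)) D) (insert (.inl a) S) a (F.erase a) := by
  have haL : L ≠ a := fun h' => h.last_notMem (h' ▸ ha)
  obtain ⟨haD, haS, hDa, hSa⟩ := h.untouched a ha
  refine ⟨?_, Finset.mem_insert_self _ _, ?_, ?_, Finset.notMem_erase _ _, fun b hb => ?_,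
    fun b hba hb => ?_⟩
  · exact Finset.disjoint_insert_left.2
      ⟨by simpa using hvS, Finset.disjoint_insert_right.2 ⟨haD, h.disjoint⟩⟩
  · rw [fiber_insert_inr_of_ne haL, hDa]
  · rw [fiber_insert_inl, hSa]
  · obtain ⟨hbD, hbS, hDb, hSb⟩ := h.untouched b (Finset.mem_of_mem_erase hb)
    have hbL : L ≠ b := fun h' => h.last_notMem (h' ▸ Finset.mem_of_mem_erase hb)
    refine ⟨by simpa using hbD, by simp [Finset.ne_of_mem_erase hb, hbS], ?_, ?_⟩
    · rw [fiber_insert_inr_of_ne hbL, hDb]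
    · rw [fiber_insert_inl, hSb]
  · have hbF : b ∉ F := fun hbF => hb (Finset.mem_erase.2 ⟨hba, hbF⟩)
    obtain ⟨hbS, hb⟩ := h.opened_of_dom_move hk u hbF
    exact ⟨Finset.mem_insert_of_mem hbS, by rwa [fiber_insert_inl]⟩

variable [Fintype α]

theorem OpeningPos.stallerPos_of_dom_move (h : OpeningPos H k D S L ∅) (hk : NeedsD H k ∅ ∅)
    {u : β} (hvS : .inr (L, u) ∉ S) :
    StallerPos H k (insert (.inr (L, u)) D) S ∅ Finset.univ where
  disjoint := Finset.disjoint_insert_left.2 ⟨hvS, h.disjoint⟩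
  inl_mem a := (h.opened_of_dom_move hk u (Finset.notMem_empty a)).1
  disjoint_armored := Finset.disjoint_empty_left _
  armored _ ha := absurd ha (Finset.notMem_empty _)
  unarmored a _ := (h.opened_of_dom_move hk u (Finset.notMem_empty a)).2

variable [Fintype β] [Nonempty β]

theorem OpeningPos.le_card_add_of_last (hpos : OpeningPos H k D S L ∅) (hk : NeedsD H k ∅ ∅)
    (hgk : domNumber H ≤ k) {u : β} (hvD : .inr (L, u) ∉ D) (hvS : .inr (L, u) ∉ S) {B : ℕ}
    (h : DomWinS (coronaProd G H) (insert (.inr (L, u)) D) S B) :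
    Fintype.card α / 2 * domNumber H + (Fintype.card α + 1) / 2 * k ≤ D.card + 1 + B := by
  have hpos' := hpos.stallerPos_of_dom_move hk hvS
  rw [← Finset.card_insert_of_notMem hvD]
  have hn := Fintype.card_pos_iff.2 ⟨L⟩
  cases h with
  | done _ _ _ hD =>
    refine (hpos'.le_card hgk ?_ hD).trans (Nat.le_add_right _ _)
    simp only [Finset.card_empty, Finset.card_univ]
    omega
  | step _ _ _ hfree hall =>
    obtain ⟨w, hwD, hwS, hw⟩ := hpos'.armor (Finset.mem_univ L) hfree
    refine le_card_add_of_stallerPos hgk (hall w hwD hwS) hw (Or.inl ?_)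
    rw [Finset.card_insert_of_notMem (Finset.notMem_empty L),
      Finset.card_erase_of_mem (Finset.mem_univ L), Finset.card_univ, Finset.card_empty]
    omega

theorem le_card_add_of_openingPos (hk : NeedsD H k ∅ ∅) (hgk : domNumber H ≤ k) {σ : ℕ}
    (hσ : StalWinS H ∅ ∅ σ) {B : ℕ} (h : DomWinD (coronaProd G H) D S B)
    (hpos : OpeningPos H k D S L F) :
    Fintype.card α / 2 * domNumber H + (Fintype.card α + 1) / 2 * k ≤ D.card + B := by
  induction B using Nat.strong_induction_on generalizing D S L F with
  | _ B ih =>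
  cases h with
  | done _ _ _ hD =>
    have := isDomSet_fiber hD (Finset.disjoint_right.1 hpos.disjoint hpos.inl_mem_last)
    rw [hpos.fiber_last_dom] at this
    exact absurd this not_isDomSet_empty
  | step _ _ j v hvD hvS h' =>
    -- Dominator must answer in the copy `L`, or Staller starts the S-game on `H` there.
    by_cases hv : copyIndex v = L
    swap
    · refine absurd h' (not_domWinS_of_stalWinS_fiber (σ := σ) hpos.inl_mem_last
        (Finset.disjoint_insert_left.2 ⟨hvS, hpos.disjoint⟩) ?_)
      rwa [fiber_insert_of_ne hv, hpos.fiber_last_dom, hpos.fiber_last_staller]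
    rcases v with c | ⟨c, u⟩ <;> obtain rfl : L = c := hv.symm
    · exact absurd hpos.inl_mem_last hvS
    rcases F.eq_empty_or_nonempty with rfl | ⟨a, ha⟩
    · have := hpos.le_card_add_of_last hk hgk hvD hvS h'
      omega
    obtain ⟨haD, haS, hDa, -⟩ := hpos.untouched a ha
    have haL : L ≠ a := fun h => hpos.last_notMem (h ▸ ha)
    have haD' : .inl a ∉ insert (.inr (L, u)) D := by simpa using haD
    cases h' with
    | done _ _ _ hD =>
      have := isDomSet_fiber hD haD'
      rw [fiber_insert_inr_of_ne haL, hDa] at this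
      exact absurd this not_isDomSet_empty
    | step _ _ _ _ hall =>
      have := ih j j.lt_succ_self (hall _ haD' haS) (hpos.claim_next hk hvS ha)
      rw [Finset.card_insert_of_notMem hvD] at this
      omega

theorem le_of_domWinS (hk : NeedsD H k ∅ ∅) (hgk : domNumber H ≤ k) {σ : ℕ}
    (hσ : StalWinS H ∅ ∅ σ) {B : ℕ} (h : DomWinS (coronaProd G H) ∅ ∅ B) :
    Fintype.card α / 2 * domNumber H + (Fintype.card α + 1) / 2 * k ≤ B := by
  rcases isEmpty_or_nonempty α with hα | ⟨⟨L⟩⟩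
  · simp
  cases h with
  | done _ _ _ hD =>
    have := isDomSet_fiber hD (Finset.notMem_empty (Sum.inl L))
    rw [fiber_empty] at this
    exact absurd this not_isDomSet_empty
  | step _ _ _ _ hall =>
    have hpos : OpeningPos H k ∅ {.inl L} L (Finset.univ.erase L) :=
      { disjoint := Finset.disjoint_empty_left _
        inl_mem_last := Finset.mem_singleton_self _
        fiber_last_dom := fiber_empty L
        fiber_last_staller := by ext; simp
        last_notMem := Finset.notMem_erase _ _
        untouched := fun a ha =>
          ⟨by simp, by simp [Finset.ne_of_mem_erase ha], fiber_empty a, by ext; simp⟩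
        opened := fun a haL ha => absurd (Finset.mem_erase.2 ⟨haL, Finset.mem_univ a⟩) ha }
    simpa using le_card_add_of_openingPos hk hgk hσ
      (hall (.inl L) (Finset.notMem_empty _) (Finset.notMem_empty _)) hpos

end Opening

end coronaProd

/-- If `o(H) = 𝒩` and `G` is a graph with `n(G) ≥ 2`, then
`⌊n(G)/2⌋·γ(H) + ⌈n(G)/2⌉·γ_MB(H) ≤ γ_MB'(G ⊙ H) ≤ n(G)·γ_MB(H)`. -/
theorem gammaMB'_coronaProd_boundsN {α β : Type*} [Fintype α] [DecidableEq α]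
    [Fintype β] [DecidableEq β] (G : SimpleGraph α) (H : SimpleGraph β)
    (hH : OutcomeN H) (hn : 2 ≤ Fintype.card α) :
    ((Fintype.card α / 2 : ℕ) : ℕ∞) * (domNumber H : ℕ∞)
        + (((Fintype.card α + 1) / 2 : ℕ) : ℕ∞) * gammaMB H
        ≤ gammaMB' (coronaProd G H) ∧
    gammaMB' (coronaProd G H) ≤ ((Fintype.card α : ℕ) : ℕ∞) * gammaMB H := by
  classical
  obtain ⟨hwin, σ, hσ⟩ := hH
  have := hσ.nonempty
  have hk : DomWinD H ∅ ∅ (Nat.find hwin) := Nat.find_spec hwin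
  have hmin : NeedsD H (Nat.find hwin) ∅ ∅ := fun m hm => by simpa using Nat.find_min' hwin hm
  have hγ : domNumber H ≤ Nat.find hwin := by simpa using hk.domNumber_le
  rw [gammaMB_eq hk fun m => Nat.find_min' hwin]
  constructor
  · exact_mod_cast le_gammaMB' fun m hm => coronaProd.le_of_domWinS (G := G) hmin hγ hσ hm
  · exact_mod_cast gammaMB'_le (coronaProd.domWinS_card_mul (G := G) hk)
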